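/- arXiv:1209.1242 — 9 statements merged into one kernel-verified Lean document; each statement's English description precedes it below -/
import Mathlib

section
/- Let G be a group, n ≥ 3, and let a, b ∈ End F_n(G). Then a R b (i.e., the principal right ideals of a and b in the monoid End F_n(G) coincide) if and only if ker a = ker b, where ker a denotes the kernel congruence {(x,y) ∈ F_n(G) × F_n(G) : xa = ya}. -/
/-! Since `F_n(G)` is free on the generators `x_j = (1, j)`, an endomorphism `c` may send each
`x_j` anywhere. If `ker a ⊆ ker b`, let `c` send `x_j`, whenever `G x_j` meets the image of `a`,
to `(a z).1⁻¹ • b z` for a generator `z` with `a z ∈ G x_j`; the kernel inclusion makes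
`a * c = b` whatever `z` was chosen. Conversely `a * c = b` forces `ker a ⊆ ker b`. -/

/-- An endomorphism of the rank-`n` free left `G`-act `F_n(G) = G × Fin n`
(the formal symbols `g x_i` are the pairs `(g, i)`), where the action is
`h • (g, i) = (h * g, i)` and equivariance says `(h • x) a = h • (x a)`. -/
structure ActEnd (G : Type*) [Group G] (n : ℕ) : Type _ where
  toFun : G × Fin n → G × Fin n
  equivariant : ∀ (h : G) (x : G × Fin n),
    toFun (h * x.1, x.2) = (h * (toFun x).1, (toFun x).2)

namespace ActEnd

variable {G : Type*} [Group G] {n : ℕ}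

/-- Composition is written left-to-right: `x (a * b) = (x a) b`. -/
instance : Monoid (ActEnd G n) where
  mul a b := ⟨fun x => b.toFun (a.toFun x), by
    intro h x
    try dsimp only
    rw [a.equivariant h x, b.equivariant]⟩
  one := ⟨id, fun _ _ => rfl⟩
  mul_assoc _ _ _ := rfl
  one_mul _ := rfl
  mul_one _ := rfl

@[simp] theorem mul_toFun (a b : ActEnd G n) (x : G × Fin n) :
    (a * b).toFun x = b.toFun (a.toFun x) := rfl

theorem ext' {a b : ActEnd G n} (h : a.toFun = b.toFun) : a = b := by
  cases a; cases b; cases h; rfl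

/-- The rank of an endomorphism of `F_n(G)`: the number of indices `j` such
that `G x_j` meets the image. -/
noncomputable def rank (a : ActEnd G n) : ℕ :=
  Nat.card {j : Fin n // ∃ x, (a.toFun x).2 = j}

end ActEnd

/-- The principal left ideal `M a` of `a`. -/
def lIdeal {M : Type*} [Monoid M] (a : M) : Set M := Set.range fun m => m * a

/-- The principal right ideal `a M` of `a`. -/
def rIdeal {M : Type*} [Monoid M] (a : M) : Set M := Set.range fun m => a * m

/-- The `H`-class of `e`: all elements that are both `L`- and `R`-related to `e`. -/
def hClass {M : Type*} [Monoid M] (e : M) : Set M :=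
  {a | lIdeal a = lIdeal e ∧ rIdeal a = rIdeal e}

theorem rIdeal_subset_rIdeal_iff {M : Type*} [Monoid M] {a b : M} :
    rIdeal b ⊆ rIdeal a ↔ ∃ c, a * c = b := by
  refine ⟨fun h => h ⟨1, mul_one b⟩, ?_⟩
  rintro ⟨c, rfl⟩ _ ⟨m, rfl⟩
  exact ⟨c * m, (mul_assoc a c m).symm⟩

namespace ActEnd

variable {G : Type*} [Group G] {n : ℕ}

theorem toFun_mk (a : ActEnd G n) (g : G) (i : Fin n) :
    a.toFun (g, i) = (g * (a.toFun (1, i)).1, (a.toFun (1, i)).2) := by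
  simpa using a.equivariant g (1, i)

def lift (f : Fin n → G × Fin n) : ActEnd G n where
  toFun p := (p.1 * (f p.2).1, (f p.2).2)
  equivariant h x := by simp only [mul_assoc]

theorem exists_mul_eq_of_ker_le {a b : ActEnd G n}
    (hab : ∀ x y, a.toFun x = a.toFun y → b.toFun x = b.toFun y) : ∃ c, a * c = b := by
  classical
  let f : Fin n → G × Fin n := fun j =>
    if hj : ∃ i, (a.toFun (1, i)).2 = j then
      ((a.toFun (1, hj.choose)).1⁻¹ * (b.toFun (1, hj.choose)).1, (b.toFun (1, hj.choose)).2)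
    else (1, j)
  refine ⟨lift f, ext' (funext fun ⟨g, i⟩ => ?_)⟩
  have hj : ∃ i', (a.toFun (1, i')).2 = (a.toFun (1, i)).2 := ⟨i, rfl⟩
  have ha : a.toFun ((a.toFun (1, i)).1 * (a.toFun (1, hj.choose)).1⁻¹, hj.choose) =
      a.toFun (1, i) := by
    rw [toFun_mk, inv_mul_cancel_right, hj.choose_spec]
  have hb := hab _ _ ha
  rw [toFun_mk b] at hb
  rw [mul_toFun, toFun_mk a, toFun_mk b, ← hb]
  simp only [lift, f, dif_pos hj, mul_assoc]

theorem exists_mul_eq_iff_ker_le {a b : ActEnd G n} :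
    (∃ c, a * c = b) ↔ ∀ x y, a.toFun x = a.toFun y → b.toFun x = b.toFun y := by
  refine ⟨?_, exists_mul_eq_of_ker_le⟩
  rintro ⟨c, rfl⟩ x y hxy
  simp only [mul_toFun, hxy]

end ActEnd

theorem stmt1_general {G : Type*} [Group G] {n : ℕ} (a b : ActEnd G n) :
    rIdeal a = rIdeal b ↔
      ∀ x y : G × Fin n, (a.toFun x = a.toFun y ↔ b.toFun x = b.toFun y) := by
  rw [Set.Subset.antisymm_iff, rIdeal_subset_rIdeal_iff, rIdeal_subset_rIdeal_iff,
    ActEnd.exists_mul_eq_iff_ker_le, ActEnd.exists_mul_eq_iff_ker_le]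
  exact ⟨fun ⟨hba, hab⟩ x y => ⟨hab x y, hba x y⟩,
    fun h => ⟨fun x y => (h x y).2, fun x y => (h x y).1⟩⟩

/-- In `End F_n(G)` (for `n ≥ 3`), two endomorphisms are `R`-related (their
principal right ideals coincide) if and only if they have the same kernel
congruence. -/
theorem stmt1 {G : Type*} [Group G] {n : ℕ} (hn : 3 ≤ n) (a b : ActEnd G n) :
    rIdeal a = rIdeal b ↔
      ∀ x y : G × Fin n, (a.toFun x = a.toFun y ↔ b.toFun x = b.toFun y) :=
  stmt1_general a b
end

section
/- Let G be a group, n ≥ 3, and let a, b ∈ End F_n(G). Then a D b (i.e., there exists c ∈ End F_n(G) with a L c and c R b) if and only if rank a = rank b. -/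
/-!
An endomorphism `a` of `F_n(G)` is determined by the images of the generators,
`x_i a = (weight a i) x_(idx a i)`, and `rank a` is the size of the range of `idx a`.
Since `(m * c).idx = c.idx ∘ m.idx`, and any `a` with `range a.idx ⊆ range c.idx` factors as
`m * c` (correct the weights by `(weight c _)⁻¹`), `a L c` iff `a.idx` and `c.idx` have the same
range. Right multiplication cannot increase the rank, so `R`-related elements have equal rank.
Conversely, if `rank a = rank b`, some permutation `π` of `Fin n` carries `range b.idx` onto
`range a.idx`; then `c = b * π` is `R`-related to `b`, as `π` is a unit, and `L`-related to `a`.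
-/

theorem lIdeal_eq_lIdeal_iff {M : Type*} [Monoid M] {a b : M} :
    lIdeal a = lIdeal b ↔ a ∈ lIdeal b ∧ b ∈ lIdeal a := by
  refine ⟨fun h => ⟨h ▸ ⟨1, one_mul a⟩, h ▸ ⟨1, one_mul b⟩⟩, fun ⟨⟨m, hm⟩, ⟨m', hm'⟩⟩ => ?_⟩
  apply Set.Subset.antisymm
  · rintro _ ⟨k, rfl⟩
    exact ⟨k * m, by simp only [← hm, mul_assoc]⟩
  · rintro _ ⟨k, rfl⟩
    exact ⟨k * m', by simp only [← hm', mul_assoc]⟩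

theorem rIdeal_eq_rIdeal_iff {M : Type*} [Monoid M] {a b : M} :
    rIdeal a = rIdeal b ↔ a ∈ rIdeal b ∧ b ∈ rIdeal a := by
  refine ⟨fun h => ⟨h ▸ ⟨1, mul_one a⟩, h ▸ ⟨1, mul_one b⟩⟩, fun ⟨⟨m, hm⟩, ⟨m', hm'⟩⟩ => ?_⟩
  apply Set.Subset.antisymm
  · rintro _ ⟨k, rfl⟩
    exact ⟨m * k, by simp only [← hm, mul_assoc]⟩
  · rintro _ ⟨k, rfl⟩
    exact ⟨m' * k, by simp only [← hm', mul_assoc]⟩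

theorem rIdeal_mul_of_isUnit {M : Type*} [Monoid M] (a : M) {u : M} (hu : IsUnit u) :
    rIdeal (a * u) = rIdeal a := by
  obtain ⟨u, rfl⟩ := hu
  refine rIdeal_eq_rIdeal_iff.mpr ⟨⟨u, rfl⟩, ⟨↑u⁻¹, ?_⟩⟩
  simp only [mul_assoc, Units.mul_inv, mul_one]

theorem Equiv.Perm.exists_image_eq_of_ncard_eq {α : Type*} [Finite α] {s t : Set α}
    (h : s.ncard = t.ncard) : ∃ π : Equiv.Perm α, π '' s = t := by
  classical
  rw [← Nat.card_coe_set_eq, ← Nat.card_coe_set_eq] at h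
  obtain ⟨e⟩ := Finite.card_eq.mp h
  let e' : {x // x ∈ s} ≃ {x // x ∈ t} := e
  refine ⟨e'.extendSubtype, Set.Subset.antisymm ?_ fun y hy => ?_⟩
  · rintro _ ⟨x, hx, rfl⟩
    exact e'.extendSubtype_mem x hx
  · refine ⟨e'.symm ⟨y, hy⟩, (e'.symm ⟨y, hy⟩).2, ?_⟩
    rw [e'.extendSubtype_apply_of_mem _ (e'.symm ⟨y, hy⟩).2, Subtype.coe_eta,
      Equiv.apply_symm_apply]

namespace ActEnd

variable {G : Type*} [Group G] {n : ℕ}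

def idx (a : ActEnd G n) (i : Fin n) : Fin n := (a.toFun (1, i)).2

def weight (a : ActEnd G n) (i : Fin n) : G := (a.toFun (1, i)).1

theorem toFun_eq (a : ActEnd G n) (x : G × Fin n) :
    a.toFun x = (x.1 * a.weight x.2, a.idx x.2) := by
  simpa [weight, idx] using a.equivariant x.1 (1, x.2)

def ofWeightIdx (w : Fin n → G) (σ : Fin n → Fin n) : ActEnd G n :=
  ⟨fun x => (x.1 * w x.2, σ x.2), fun h x => by rw [mul_assoc]⟩

@[simp] theorem ofWeightIdx_toFun (w : Fin n → G) (σ : Fin n → Fin n) (x : G × Fin n) :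
    (ofWeightIdx w σ).toFun x = (x.1 * w x.2, σ x.2) := rfl

theorem idx_mul (a b : ActEnd G n) : (a * b).idx = b.idx ∘ a.idx := by
  funext i
  rw [idx, mul_toFun, toFun_eq b]
  rfl

theorem range_idx_mul (a b : ActEnd G n) :
    Set.range (a * b).idx = b.idx '' Set.range a.idx := by
  rw [idx_mul, Set.range_comp]

theorem rank_eq_ncard_range_idx (a : ActEnd G n) : a.rank = (Set.range a.idx).ncard := by
  rw [rank, ← Nat.card_coe_set_eq]
  congr
  ext j
  constructor
  · rintro ⟨x, rfl⟩
    exact ⟨x.2, by rw [toFun_eq]⟩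
  · rintro ⟨i, rfl⟩
    exact ⟨(1, i), by rw [toFun_eq]⟩

theorem rank_mul_le (a b : ActEnd G n) : (a * b).rank ≤ a.rank := by
  rw [rank_eq_ncard_range_idx, rank_eq_ncard_range_idx, range_idx_mul]
  exact Set.ncard_image_le

theorem mem_lIdeal_iff_range_idx_subset {a c : ActEnd G n} :
    a ∈ lIdeal c ↔ Set.range a.idx ⊆ Set.range c.idx := by
  constructor
  · rintro ⟨m, rfl⟩
    rw [range_idx_mul]
    exact Set.image_subset_range _ _
  · intro h
    choose j hj using fun i => h (Set.mem_range_self i)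
    refine ⟨ofWeightIdx (fun i => a.weight i * (c.weight (j i))⁻¹) j, ext' (funext fun x => ?_)⟩
    simp [toFun_eq c, toFun_eq a, hj, mul_assoc]

theorem lIdeal_eq_lIdeal_iff_range_idx_eq {a c : ActEnd G n} :
    lIdeal a = lIdeal c ↔ Set.range a.idx = Set.range c.idx := by
  rw [lIdeal_eq_lIdeal_iff, mem_lIdeal_iff_range_idx_subset, mem_lIdeal_iff_range_idx_subset,
    Set.Subset.antisymm_iff]

theorem rank_eq_of_lIdeal_eq {a c : ActEnd G n} (h : lIdeal a = lIdeal c) :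
    a.rank = c.rank := by
  rw [rank_eq_ncard_range_idx, rank_eq_ncard_range_idx,
    lIdeal_eq_lIdeal_iff_range_idx_eq.mp h]

theorem rank_eq_of_rIdeal_eq {a c : ActEnd G n} (h : rIdeal a = rIdeal c) :
    a.rank = c.rank := by
  obtain ⟨⟨m, rfl⟩, ⟨m', hm'⟩⟩ := rIdeal_eq_rIdeal_iff.mp h
  refine le_antisymm (rank_mul_le c m) ?_
  calc c.rank = (c * m * m').rank := congrArg rank hm'.symm
    _ ≤ (c * m).rank := rank_mul_le _ m'

def ofPerm (π : Equiv.Perm (Fin n)) : ActEnd G n := ofWeightIdx 1 π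

theorem ofPerm_mul_ofPerm_symm (π : Equiv.Perm (Fin n)) :
    (ofPerm π * ofPerm π.symm : ActEnd G n) = 1 :=
  ext' (funext fun x => show _ = x by simp [ofPerm])

theorem isUnit_ofPerm (π : Equiv.Perm (Fin n)) : IsUnit (ofPerm π : ActEnd G n) :=
  ⟨⟨ofPerm π, ofPerm π.symm, ofPerm_mul_ofPerm_symm π, by
    simpa using ofPerm_mul_ofPerm_symm (G := G) π.symm⟩, rfl⟩

theorem idx_ofPerm (π : Equiv.Perm (Fin n)) : (ofPerm π : ActEnd G n).idx = π := rfl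

end ActEnd

theorem stmt2_general {G : Type*} [Group G] {n : ℕ} (a b : ActEnd G n) :
    (∃ c : ActEnd G n, lIdeal a = lIdeal c ∧ rIdeal c = rIdeal b) ↔
      ActEnd.rank a = ActEnd.rank b := by
  refine ⟨fun ⟨c, hL, hR⟩ => (ActEnd.rank_eq_of_lIdeal_eq hL).trans
    (ActEnd.rank_eq_of_rIdeal_eq hR), fun hrank => ?_⟩
  rw [ActEnd.rank_eq_ncard_range_idx, ActEnd.rank_eq_ncard_range_idx] at hrank
  obtain ⟨π, hπ⟩ := Equiv.Perm.exists_image_eq_of_ncard_eq hrank.symm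
  refine ⟨b * ActEnd.ofPerm π, ?_, rIdeal_mul_of_isUnit b (ActEnd.isUnit_ofPerm π)⟩
  rw [ActEnd.lIdeal_eq_lIdeal_iff_range_idx_eq, ActEnd.range_idx_mul, ActEnd.idx_ofPerm, hπ]

/-- In `End F_n(G)` (for `n ≥ 3`), two endomorphisms are `D`-related if and
only if they have the same rank. -/
theorem stmt2 {G : Type*} [Group G] {n : ℕ} (hn : 3 ≤ n) (a b : ActEnd G n) :
    (∃ c : ActEnd G n, lIdeal a = lIdeal c ∧ rIdeal c = rIdeal b) ↔
      ActEnd.rank a = ActEnd.rank b :=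
  stmt2_general a b
end

section
/- Let G be a group, n ≥ 3, and let a, b ∈ End F_n(G) both have rank 1, say (g x_t)a = (g·a_t) x_j and (g x_t)b = (g·b_t) x_k for elements a_t, b_t ∈ G (t = 1,…,n) and fixed indices j, k. Then ker a = ker b (i.e., for all x, y ∈ F_n(G), xa = ya if and only if xb = yb) if and only if there exists g ∈ G with a_t·g = b_t for all t ∈ {1,…,n}. -/
/- Right multiplication by `g` preserves `u * c t = v * c s`; conversely, the instance
`1 * c t = (c t * (c t₀)⁻¹) * c t₀` forces `d t = c t * (c t₀)⁻¹ * d t₀`. -/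
theorem exists_mul_eq_iff_forall_mul_eq_iff {ι G : Type*} [Group G] {c d : ι → G} :
    (∃ g, ∀ t, c t * g = d t) ↔
      ∀ (u : G) (t : ι) (v : G) (s : ι), u * c t = v * c s ↔ u * d t = v * d s := by
  constructor
  · rintro ⟨g, hg⟩ u t v s
    simp only [← hg, ← mul_assoc, mul_left_inj]
  · intro h
    rcases isEmpty_or_nonempty ι with _ | ⟨⟨t₀⟩⟩
    · exact ⟨1, isEmptyElim⟩
    refine ⟨(c t₀)⁻¹ * d t₀, fun t => ?_⟩
    have hd : 1 * d t = c t * (c t₀)⁻¹ * d t₀ :=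
      (h 1 t (c t * (c t₀)⁻¹) t₀).mp (by group)
    rw [one_mul] at hd
    rw [hd, mul_assoc]

namespace ActEnd

variable {G : Type*} [Group G] {n : ℕ}

theorem toFun_eq_toFun_iff {a : ActEnd G n} {c : Fin n → G} {j : Fin n}
    (ha : ∀ (g : G) (t : Fin n), a.toFun (g, t) = (g * c t, j)) (x y : G × Fin n) :
    a.toFun x = a.toFun y ↔ x.1 * c x.2 = y.1 * c y.2 := by
  rw [ha, ha, Prod.mk.injEq, and_iff_left rfl]

end ActEnd

theorem stmt3_general {G : Type*} [Group G] {n : ℕ}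
    (a b : ActEnd G n) (ac bc : Fin n → G) (j k : Fin n)
    (ha : ∀ (g : G) (t : Fin n), a.toFun (g, t) = (g * ac t, j))
    (hb : ∀ (g : G) (t : Fin n), b.toFun (g, t) = (g * bc t, k)) :
    (∀ x y : G × Fin n, a.toFun x = a.toFun y ↔ b.toFun x = b.toFun y) ↔
      ∃ g : G, ∀ t : Fin n, ac t * g = bc t := by
  simp only [ActEnd.toFun_eq_toFun_iff ha, ActEnd.toFun_eq_toFun_iff hb, Prod.forall,
    exists_mul_eq_iff_forall_mul_eq_iff]

/-- For rank-1 endomorphisms `a, b` of `F_n(G)` given by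
`(g x_t) a = (g * ac t) x_j` and `(g x_t) b = (g * bc t) x_k`, the kernels of
`a` and `b` coincide iff there is `g ∈ G` with `ac t * g = bc t` for all `t`. -/
theorem stmt3 {G : Type*} [Group G] {n : ℕ} (hn : 3 ≤ n)
    (a b : ActEnd G n) (ac bc : Fin n → G) (j k : Fin n)
    (ha : ∀ (g : G) (t : Fin n), a.toFun (g, t) = (g * ac t, j))
    (hb : ∀ (g : G) (t : Fin n), b.toFun (g, t) = (g * bc t, k)) :
    (∀ x y : G × Fin n, a.toFun x = a.toFun y ↔ b.toFun x = b.toFun y) ↔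
      ∃ g : G, ∀ t : Fin n, ac t * g = bc t :=
  stmt3_general a b ac bc j k ha hb
end

section
/- Let M be a monoid and let e, f, g, h ∈ M be idempotents forming an E-square, i.e., e R f, f L g, g R h, h L e. Then the four equalities eg = f, ge = h, fh = e, hf = g are equivalent: if any one of them holds, then all four hold, and in that case the set {e, f, g, h} is a rectangular band (it is closed under multiplication and xyx = x for all x, y ∈ {e, f, g, h}). -/
lemma rfact {M : Type*} [Monoid M] {x y : M} (hx : x * x = x)
    (hxy : rIdeal x = rIdeal y) : x * y = y := by
  have hy : y ∈ rIdeal x := hxy ▸ ⟨1, (mul_one y)⟩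
  obtain ⟨m, hm⟩ := hy
  simp only at hm
  calc x * y = x * x * m := by rw [mul_assoc, hm]
    _ = y := by rw [hx, hm]

lemma lfact {M : Type*} [Monoid M] {x y : M} (hx : x * x = x)
    (hxy : lIdeal x = lIdeal y) : y * x = y := by
  have hy : y ∈ lIdeal x := hxy ▸ ⟨1, (one_mul y)⟩
  obtain ⟨m, hm⟩ := hy
  simp only at hm
  calc y * x = m * (x * x) := by rw [← hm, mul_assoc]
    _ = y := by rw [hx, hm]

/-- Rotation lemma: in an E-square `(e,f,g,h)`, `eg = f` implies `ge = h`. -/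
lemma rot {M : Type*} [Monoid M] {e f g h : M} (hf : f * f = f) (hh : h * h = h)
    (hef : rIdeal e = rIdeal f) (hgh : rIdeal g = rIdeal h)
    (hhe : lIdeal h = lIdeal e) (heg : e * g = f) : g * e = h := by
  have hfe : f * e = e := rfact hf hef.symm
  have hege : e * g * e = e := by rw [heg, hfe]
  have hhg : h * g = g := rfact hh hgh.symm
  -- h ∈ lIdeal e
  have hmem : h ∈ lIdeal e := hhe ▸ ⟨1, (one_mul h)⟩
  obtain ⟨m, hm⟩ := hmem
  simp only at hm
  calc g * e = h * g * e := by rw [hhg]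
    _ = m * (e * g * e) := by rw [← hm]; simp [mul_assoc]
    _ = h := by rw [hege, hm]

/-- For an `E`-square `(e, f, g, h)` of idempotents in a monoid (so `e R f`,
`f L g`, `g R h`, `h L e`), the four equalities `eg = f`, `ge = h`, `fh = e`,
`hf = g` are equivalent, and when they hold the set `{e, f, g, h}` is a
rectangular band: it is closed under multiplication and `x y x = x` on it. -/
theorem stmt6 {M : Type*} [Monoid M] (e f g h : M)
    (he : e * e = e) (hf : f * f = f) (hg : g * g = g) (hh : h * h = h)
    (hef : rIdeal e = rIdeal f) (hfg : lIdeal f = lIdeal g)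
    (hgh : rIdeal g = rIdeal h) (hhe : lIdeal h = lIdeal e) :
    ((e * g = f ↔ g * e = h) ∧ (e * g = f ↔ f * h = e) ∧ (e * g = f ↔ h * f = g)) ∧
    (e * g = f → ∀ x ∈ ({e, f, g, h} : Set M), ∀ y ∈ ({e, f, g, h} : Set M),
      x * y ∈ ({e, f, g, h} : Set M) ∧ x * y * x = x) := by
  have hef' : e * f = f := rfact he hef
  have hfe : f * e = e := rfact hf hef.symm
  have hfg' : f * g = f := lfact hg hfg.symm
  have hgf : g * f = g := lfact hf hfg
  have hgh' : g * h = h := rfact hg hgh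
  have hhg : h * g = g := rfact hh hgh.symm
  have hhe' : h * e = h := lfact he hhe.symm
  have heh : e * h = e := lfact hh hhe
  -- main implication: eg = f → ge = h
  have A : e * g = f → g * e = h := fun heg => rot hf hh hef hgh hhe heg
  -- rotated square (g,h,e,f): ge = h → eg = f
  have B : g * e = h → e * g = f := fun hge => rot hh hf hgh hef hfg hge
  -- square (f,e,h,g): fh = e → hf = g
  have C : f * h = e → h * f = g := fun hfh => rot he hg hef.symm hgh.symm hfg.symm hfh
  -- square (h,g,f,e): hf = g → fh = e
  have D : h * f = g → f * h = e := fun hhf => rot hg he hgh.symm hef.symm hhe.symm hhf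
  -- eg = f → fh = e
  have E : e * g = f → f * h = e := by
    intro heg
    have hge := A heg
    calc f * h = (e * g) * (g * e) := by rw [heg, hge]
      _ = e * g * e := by rw [mul_assoc, ← mul_assoc g g e, hg, ← mul_assoc]
      _ = e := by rw [heg, hfe]
  -- fh = e → eg = f
  have F : f * h = e → e * g = f := by
    intro hfh
    have hhf := C hfh
    calc e * g = (f * h) * (h * f) := by rw [hfh, hhf]
      _ = f * h * f := by rw [mul_assoc, ← mul_assoc h h f, hh, ← mul_assoc]
      _ = f := by rw [hfh, hef']
  refine ⟨⟨⟨A, B⟩, ⟨E, F⟩, ⟨fun heg => C (E heg), fun hhf => F (D hhf)⟩⟩, ?_⟩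
  intro heg x hx y hy
  have hge := A heg
  have hfh := E heg
  have hhf := C hfh
  simp only [Set.mem_insert_iff, Set.mem_singleton_iff] at hx hy ⊢
  rcases hx with rfl | rfl | rfl | rfl <;> rcases hy with rfl | rfl | rfl | rfl <;>
    simp [he, hf, hg, hh, hef', hfe, hfg', hgf, hgh', hhg, hhe', heh, heg, hge, hfh, hhf]
end

section
/- Let G be a group, I and J nonempty sets, and P : J → I → G. Let M = I × G × J be the Rees matrix semigroup with multiplication (i, a, j)(k, b, l) = (i, a·(P j k)·b, l), and for i ∈ I, j ∈ J write e_{ij} = (i, (P j i)⁻¹, j) (these are exactly the idempotents of M). Then for i, k ∈ I and j, l ∈ J, the E-square (e_{ij}, e_{il}, e_{kl}, e_{kj}) is a rectangular band (equivalently, e_{ij} e_{kl} = e_{il}) if and only if (P j i)⁻¹·(P j k) = (P l i)⁻¹·(P l k). -/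
/-- Multiplication in the Rees matrix semigroup `M(G; I, J; P)` on `I × G × J`:
`(i, a, j)(k, b, l) = (i, a * (P j k) * b, l)`. -/
def reesMul {G : Type*} [Group G] {I J : Type*} (P : J → I → G)
    (x y : I × G × J) : I × G × J :=
  (x.1, x.2.1 * P x.2.2 y.1 * y.2.1, y.2.2)

/-- The idempotent `e_{ij} = (i, (P j i)⁻¹, j)` of the Rees matrix semigroup. -/
def reesE {G : Type*} [Group G] {I J : Type*} (P : J → I → G) (i : I) (j : J) :
    I × G × J := (i, (P j i)⁻¹, j)

/-- In a Rees matrix semigroup `M(G; I, J; P)` over a group `G`, the `E`-square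
`(e_{ij}, e_{il}, e_{kl}, e_{kj})` is a rectangular band (equivalently,
`e_{ij} e_{kl} = e_{il}`) if and only if
`(P j i)⁻¹ (P j k) = (P l i)⁻¹ (P l k)`. -/
theorem stmt7 {G : Type*} [Group G] {I J : Type*} [Nonempty I] [Nonempty J]
    (P : J → I → G) (i k : I) (j l : J) :
    reesMul P (reesE P i j) (reesE P k l) = reesE P i l ↔
      (P j i)⁻¹ * P j k = (P l i)⁻¹ * P l k := by
  simp only [reesMul, reesE, Prod.mk.injEq, true_and, and_true]
  constructor
  · intro h; rw [← h]; group
  · intro h; rw [h]; group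
end

section
/- Let G be a group, n ≥ 3, and let e, f, g, h ∈ End F_n(G) be rank-1 idempotents with e R f, f L g, g R h, h L e (Green's relations in End F_n(G)). Then the square (e, f, g, h) is singular — i.e., there exists an idempotent k ∈ End F_n(G) such that either (ek = e, fk = f, ke = h, kf = g) or (ke = e, kh = h, ek = f, hk = g) — if and only if {e, f, g, h} is a rectangular band, equivalently eg = f. -/
/-!
Every endomorphism of `F_n(G)` has the form `g x_i ↦ (g v_i) x_{σ i}` for a vector `v : Fin n → G`
and an index map `σ`, and composition becomes `(v, σ)(w, τ) = (i ↦ v_i w_{σ i}, τ ∘ σ)`. A rank-1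
idempotent is `(v, const j)` with `v_j = 1`, and its `R`- and `L`-classes are obtained by scaling
`v` on the right and by changing `v` and keeping `j`, respectively. So the square is
`e = (v, j)`, `f = (v c, j')`, `g = (w, j')`, `h = (w d, j)` with `v_{j'} c = 1 = w_j d`, and
`e g = f` says `w_j = c`. A singularising idempotent `k` forces this relation when evaluated at `j'`
(up-down) or at `j` (left-right); conversely, if `w_j = c`, the idempotent `k` that fixes `x_{j'}`
and sends `x_i ↦ (w_i d) x_j` for `i ≠ j'` singularises the square up-down.
-/

def IsSingularSquare {M : Type*} [Monoid M] (e f g h : M) : Prop :=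
  ∃ k : M, k * k = k ∧
    ((e * k = e ∧ f * k = f ∧ k * e = h ∧ k * f = g) ∨
     (k * e = e ∧ k * h = h ∧ e * k = f ∧ h * k = g))

section Green

variable {M : Type*} [Monoid M] {a b : M}

theorem exists_mul_eq_of_rIdeal_eq (hab : rIdeal a = rIdeal b) : ∃ u, a * u = b := by
  have hb : b ∈ rIdeal b := ⟨1, mul_one b⟩
  rwa [← hab] at hb

theorem exists_mul_eq_of_lIdeal_eq (hab : lIdeal a = lIdeal b) : ∃ u, u * a = b := by
  have hb : b ∈ lIdeal b := ⟨1, one_mul b⟩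
  rwa [← hab] at hb

end Green

namespace ActEnd

variable {G : Type*} [Group G] {n : ℕ}

def ofVecIdx (v : Fin n → G) (σ : Fin n → Fin n) : ActEnd G n :=
  ⟨fun x => (x.1 * v x.2, σ x.2), fun _ _ => by simp only [mul_assoc]⟩

theorem exists_ofVecIdx_eq (a : ActEnd G n) : ∃ v σ, ofVecIdx v σ = a := by
  refine ⟨fun i => (a.toFun (1, i)).1, fun i => (a.toFun (1, i)).2, ext' ?_⟩
  funext ⟨c, i⟩
  simpa [ofVecIdx] using (a.equivariant c (1, i)).symm

theorem ofVecIdx_inj {v w : Fin n → G} {σ τ : Fin n → Fin n} :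
    ofVecIdx v σ = ofVecIdx w τ ↔ v = w ∧ σ = τ := by
  refine ⟨fun h => ?_, fun ⟨hv, hσ⟩ => hv ▸ hσ ▸ rfl⟩
  have h1 i := congrArg (fun a : ActEnd G n => a.toFun (1, i)) h
  simp only [ofVecIdx, one_mul, Prod.mk.injEq] at h1
  exact ⟨funext fun i => (h1 i).1, funext fun i => (h1 i).2⟩

@[simp] theorem ofVecIdx_mul (v w : Fin n → G) (σ τ : Fin n → Fin n) :
    ofVecIdx v σ * ofVecIdx w τ = ofVecIdx (fun i => v i * w (σ i)) (fun i => τ (σ i)) :=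
  ext' <| funext fun _ => by simp [ofVecIdx, mul_assoc]

theorem exists_eq_const_of_rank_ofVecIdx_eq_one {v : Fin n → G} {σ : Fin n → Fin n}
    (h : (ofVecIdx v σ).rank = 1) : ∃ j, σ = fun _ => j := by
  obtain ⟨⟨j, _⟩, hj⟩ := Nat.card_eq_one_iff_exists.1 h
  exact ⟨j, funext fun i => congrArg Subtype.val (hj ⟨σ i, (1, i), rfl⟩)⟩

theorem ofVecIdx_const_mul_self_iff {v : Fin n → G} {j : Fin n} :
    (ofVecIdx v fun _ => j) * (ofVecIdx v fun _ => j) = (ofVecIdx v fun _ => j) ↔ v j = 1 := by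
  simp only [ofVecIdx_mul, ofVecIdx_inj, funext_iff, mul_eq_left, and_true]
  exact ⟨fun h => h j, fun h _ => h⟩

section RankOne

variable {v : Fin n → G} {j : Fin n} {b : ActEnd G n}

theorem exists_eq_ofVecIdx_of_rIdeal_eq (h : rIdeal (ofVecIdx v fun _ => j) = rIdeal b) :
    ∃ c j', b = ofVecIdx (fun i => v i * c) fun _ => j' := by
  obtain ⟨u, rfl⟩ := exists_mul_eq_of_rIdeal_eq h
  obtain ⟨w, τ, rfl⟩ := exists_ofVecIdx_eq u
  exact ⟨w j, τ j, ofVecIdx_mul _ _ _ _⟩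

theorem exists_eq_ofVecIdx_of_lIdeal_eq (h : lIdeal (ofVecIdx v fun _ => j) = lIdeal b) :
    ∃ w, b = ofVecIdx w fun _ => j := by
  obtain ⟨u, rfl⟩ := exists_mul_eq_of_lIdeal_eq h
  obtain ⟨w, τ, rfl⟩ := exists_ofVecIdx_eq u
  exact ⟨_, ofVecIdx_mul _ _ _ _⟩

theorem idx_eq_of_lIdeal_eq {w : Fin n → G} {j' : Fin n}
    (h : lIdeal (ofVecIdx v fun _ => j) = lIdeal (ofVecIdx w fun _ => j')) : j' = j := by
  obtain ⟨_, hw⟩ := exists_eq_ofVecIdx_of_lIdeal_eq h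
  exact congrFun (ofVecIdx_inj.1 hw).2 j

end RankOne

section Square

variable {v w : Fin n → G} {c d : G} {j j' : Fin n}

theorem ofVecIdx_mul_ofVecIdx_eq_iff :
    (ofVecIdx v fun _ => j) * (ofVecIdx w fun _ => j') = (ofVecIdx (fun i => v i * c) fun _ => j')
      ↔ w j = c := by
  have : Nonempty (Fin n) := ⟨j⟩
  simp only [ofVecIdx_mul, ofVecIdx_inj, funext_iff, mul_right_inj, forall_const, and_true]

theorem eq_of_isSingularSquare (hc : v j' * c = 1) (hw : w j' = 1) (hd : w j * d = 1)
    (hs : IsSingularSquare (ofVecIdx v fun _ => j) (ofVecIdx (fun i => v i * c) fun _ => j')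
      (ofVecIdx w fun _ => j') (ofVecIdx (fun i => w i * d) fun _ => j)) :
    w j = c := by
  obtain ⟨k, -, ⟨-, hfk, hke, -⟩ | ⟨-, -, hek, hhk⟩⟩ := hs
  all_goals obtain ⟨κ, τ, rfl⟩ := exists_ofVecIdx_eq k
  · simp only [ofVecIdx_mul, ofVecIdx_inj, funext_iff] at hfk hke
    have hκ : κ j' = 1 := mul_eq_left.1 (hfk.1 j')
    have hvd : v j' = d := by simpa [hκ, hfk.2 j', hw] using hke.1 j'
    exact left_inv_eq_right_inv (hvd ▸ hd) hc
  · simp only [ofVecIdx_mul, ofVecIdx_inj, funext_iff] at hek hhk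
    have hκ : κ j = c := mul_left_cancel (hek.1 j)
    simpa [hd, hκ, eq_comm] using hhk.1 j

theorem isSingularSquare_of_eq (hv : v j = 1) (hc : v j' * c = 1) (hw : w j' = 1)
    (hd : w j * d = 1) (hwc : w j = c) :
    IsSingularSquare (ofVecIdx v fun _ => j) (ofVecIdx (fun i => v i * c) fun _ => j')
      (ofVecIdx w fun _ => j') (ofVecIdx (fun i => w i * d) fun _ => j) := by
  subst hwc
  have hvd : v j' = d := left_inv_eq_right_inv hc hd
  refine ⟨ofVecIdx (Function.update (fun i => w i * d) j' 1) (Function.update (fun _ => j) j' j'),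
    ?_, Or.inl ⟨?_, ?_, ?_, ?_⟩⟩ <;>
  simp only [ofVecIdx_mul, ofVecIdx_inj, funext_iff, Function.update_apply]
  · exact ⟨fun i => by split_ifs <;> simp_all, fun i => by split_ifs <;> simp_all⟩
  · exact ⟨fun i => by split_ifs <;> simp_all, fun i => by split_ifs <;> simp_all⟩
  · simp
  · simpa using fun i => by split_ifs <;> simp_all
  · simpa using fun i => by split_ifs <;> simp_all [mul_assoc]

end Square

end ActEnd

theorem stmt8_general {G : Type*} [Group G] {n : ℕ} (e f g h : ActEnd G n)
    (he : e * e = e) (hf : f * f = f) (hg : g * g = g) (hh : h * h = h)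
    (hre : ActEnd.rank e = 1)
    (hef : rIdeal e = rIdeal f) (hfg : lIdeal f = lIdeal g)
    (hgh : rIdeal g = rIdeal h) (hhe : lIdeal h = lIdeal e) :
    (∃ k : ActEnd G n, k * k = k ∧
        ((e * k = e ∧ f * k = f ∧ k * e = h ∧ k * f = g) ∨
         (k * e = e ∧ k * h = h ∧ e * k = f ∧ h * k = g))) ↔ e * g = f := by
  obtain ⟨v, σ, rfl⟩ := ActEnd.exists_ofVecIdx_eq e
  obtain ⟨j, rfl⟩ := ActEnd.exists_eq_const_of_rank_ofVecIdx_eq_one hre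
  obtain ⟨c, j', rfl⟩ := ActEnd.exists_eq_ofVecIdx_of_rIdeal_eq hef
  obtain ⟨w, rfl⟩ := ActEnd.exists_eq_ofVecIdx_of_lIdeal_eq hfg
  obtain ⟨d, j'', rfl⟩ := ActEnd.exists_eq_ofVecIdx_of_rIdeal_eq hgh
  obtain rfl := ActEnd.idx_eq_of_lIdeal_eq hhe
  rw [ActEnd.ofVecIdx_const_mul_self_iff] at he hf hg hh
  rw [ActEnd.ofVecIdx_mul_ofVecIdx_eq_iff]
  exact ⟨ActEnd.eq_of_isSingularSquare hf hg hh, ActEnd.isSingularSquare_of_eq he hf hg hh⟩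

/-- An `E`-square `(e, f, g, h)` of rank-1 idempotents of `End F_n(G)`
(`n ≥ 3`) is singular (there is an idempotent `k` witnessing an up-down or a
left-right singularisation) if and only if `{e, f, g, h}` is a rectangular
band, equivalently `e g = f`. -/
theorem stmt8 {G : Type*} [Group G] {n : ℕ} (hn : 3 ≤ n) (e f g h : ActEnd G n)
    (he : e * e = e) (hf : f * f = f) (hg : g * g = g) (hh : h * h = h)
    (hre : ActEnd.rank e = 1) (hrf : ActEnd.rank f = 1)
    (hrg : ActEnd.rank g = 1) (hrh : ActEnd.rank h = 1)
    (hef : rIdeal e = rIdeal f) (hfg : lIdeal f = lIdeal g)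
    (hgh : rIdeal g = rIdeal h) (hhe : lIdeal h = lIdeal e) :
    (∃ k : ActEnd G n, k * k = k ∧
        ((e * k = e ∧ f * k = f ∧ k * e = h ∧ k * f = g) ∨
         (k * e = e ∧ k * h = h ∧ e * k = f ∧ h * k = g))) ↔ e * g = f :=
  stmt8_general e f g h he hf hg hh hre hef hfg hgh hhe
end

section
/- Let G be a group, n ≥ 3, and let e, f, g, h ∈ End F_n(G) be rank-1 idempotents with e R f, f L g, g R h, h L e. Then the square (e, f, g, h) is singular if and only if it is up-down singular, i.e., if there exists an idempotent k ∈ End F_n(G) with either (ek = e, fk = f, ke = h, kf = g) or (ke = e, kh = h, ek = f, hk = g), then there exists an idempotent k' with ek' = e, fk' = f, k'e = h, k'f = g. -/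
/-!
A rank-1 endomorphism has the form `g x_i ↦ (g A_i) x_c` for a column `c` and multipliers
`A : Fin n → G`, and it is idempotent iff `A_c = 1`. Writing `e, f, g, h` with columns `p, q, q, p`
and multipliers `E, F, Γ, H`, the `R`-relations give `F_i = E_i F_p` and `H_i = Γ_i H_q`. A
left-right witness `k` has `F_p = Γ_p`, both being the multiplier of `k` at column `p`; hence
`E_q = F_p⁻¹ = H_q` and `H_i F_p = Γ_i`, which is exactly what is needed for `h`, modified to fix
the column `q` pointwise, to be an up-down witness.
-/

theorem mem_lIdeal_self {M : Type*} [Monoid M] (a : M) : a ∈ lIdeal a := ⟨1, one_mul a⟩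

theorem mem_rIdeal_self {M : Type*} [Monoid M] (a : M) : a ∈ rIdeal a := ⟨1, mul_one a⟩

namespace ActEnd

variable {G : Type*} [Group G] {n : ℕ}

/-- The endomorphism `g x_i ↦ (g κ_i) x_(τ i)`. -/
def diag (τ : Fin n → Fin n) (κ : Fin n → G) : ActEnd G n :=
  ⟨fun x => (x.1 * κ x.2, τ x.2), fun h x => by dsimp only; rw [mul_assoc]⟩

@[simp] theorem diag_toFun (τ : Fin n → Fin n) (κ : Fin n → G) (x : G × Fin n) :
    (diag τ κ).toFun x = (x.1 * κ x.2, τ x.2) := rfl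

theorem eq_diag (a : ActEnd G n) :
    a = diag (fun i => (a.toFun (1, i)).2) (fun i => (a.toFun (1, i)).1) :=
  ext' <| funext fun ⟨x, i⟩ => by simpa using a.equivariant x (1, i)

theorem diag_inj {τ σ : Fin n → Fin n} {κ μ : Fin n → G} :
    diag τ κ = diag σ μ ↔ τ = σ ∧ κ = μ := by
  refine ⟨fun h => ?_, fun ⟨hτ, hκ⟩ => hτ ▸ hκ ▸ rfl⟩
  have h₁ (i : Fin n) := congrArg (fun a : ActEnd G n => a.toFun (1, i)) h
  simp only [diag_toFun, one_mul, Prod.mk.injEq] at h₁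
  exact ⟨funext fun i => (h₁ i).2, funext fun i => (h₁ i).1⟩

theorem diag_mul_diag (τ σ : Fin n → Fin n) (κ μ : Fin n → G) :
    diag τ κ * diag σ μ = diag (σ ∘ τ) (fun i => κ i * μ (τ i)) :=
  ext' <| funext fun x => by simp [mul_assoc]

theorem exists_eq_diag_const_of_rank_eq_one {a : ActEnd G n} (ha : a.rank = 1) :
    ∃ c A, a = diag (fun _ => c) A := by
  obtain ⟨⟨c, _⟩, hc⟩ := Nat.card_eq_one_iff_exists.mp ha
  refine ⟨c, _, (eq_diag a).trans (diag_inj.mpr ⟨funext fun i => ?_, rfl⟩)⟩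
  exact congrArg Subtype.val (hc ⟨_, (1, i), rfl⟩)

theorem exists_eq_diag_const_of_mem_lIdeal {a : ActEnd G n} {c : Fin n} {A : Fin n → G}
    (ha : a ∈ lIdeal (diag (fun _ => c) A)) : ∃ A', a = diag (fun _ => c) A' := by
  obtain ⟨w, rfl⟩ := ha
  rw [eq_diag w]
  exact ⟨_, diag_mul_diag ..⟩

theorem diag_const_mul_apply {c d : Fin n} {A B : Fin n → G} {u : ActEnd G n}
    (hu : diag (fun _ => c) A * u = diag (fun _ => d) B) (i : Fin n) :
    B i = A i * (u.toFun (1, c)).1 := by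
  rw [eq_diag u, diag_mul_diag, diag_inj] at hu
  exact (congrFun hu.2 i).symm

theorem apply_eq_one_of_diag_const_mul_self {c : Fin n} {A : Fin n → G}
    (hA : diag (fun _ => c) A * diag (fun _ => c) A = diag (fun _ => c) A) : A c = 1 := by
  simpa using diag_const_mul_apply hA c

theorem apply_eq_mul_of_rIdeal_eq {p q : Fin n} {A B : Fin n → G} (hA : A p = 1)
    (hAB : rIdeal (diag (fun _ => p) A) = rIdeal (diag (fun _ => q) B)) (i : Fin n) :
    B i = A i * B p := by
  obtain ⟨u, hu⟩ : diag (fun _ => q) B ∈ rIdeal (diag (fun _ => p) A) :=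
    hAB ▸ mem_rIdeal_self _
  rw [diag_const_mul_apply hu i, diag_const_mul_apply hu p, hA, one_mul]

theorem exists_upDown_of_apply_eq {p q : Fin n} {E F Γ H : Fin n → G}
    (hE : E p = 1) (hF : F q = 1) (hΓ : Γ q = 1) (hH : H p = 1)
    (hEH : E q = H q) (hHF : ∀ i, H i * F p = Γ i) :
    ∃ k : ActEnd G n, k * k = k ∧
      (diag (fun _ => p) E * k = diag (fun _ => p) E ∧
       diag (fun _ => q) F * k = diag (fun _ => q) F ∧
       k * diag (fun _ => p) E = diag (fun _ => p) H ∧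
       k * diag (fun _ => q) F = diag (fun _ => q) Γ) := by
  refine ⟨diag (Function.update (fun _ => p) q q) (Function.update H q 1), ?_, ?_, ?_, ?_, ?_⟩ <;>
    rw [diag_mul_diag] <;>
    refine diag_inj.mpr ⟨funext fun i => ?_, funext fun i => ?_⟩ <;>
    by_cases hi : i = q <;> by_cases hp : p = q <;> simp_all

end ActEnd

theorem stmt9_general {G : Type*} [Group G] {n : ℕ} (e f g h : ActEnd G n)
    (he : e * e = e) (hf : f * f = f) (hg : g * g = g) (hh : h * h = h)
    (hre : ActEnd.rank e = 1)
    (hrg : ActEnd.rank g = 1)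
    (hef : rIdeal e = rIdeal f) (hfg : lIdeal f = lIdeal g)
    (hgh : rIdeal g = rIdeal h) (hhe : lIdeal h = lIdeal e) :
    (∃ k : ActEnd G n, k * k = k ∧
        ((e * k = e ∧ f * k = f ∧ k * e = h ∧ k * f = g) ∨
         (k * e = e ∧ k * h = h ∧ e * k = f ∧ h * k = g))) →
      ∃ k' : ActEnd G n, k' * k' = k' ∧
        (e * k' = e ∧ f * k' = f ∧ k' * e = h ∧ k' * f = g) := by
  rintro ⟨k, hk, hud | ⟨-, -, hek, hhk⟩⟩
  · exact ⟨k, hk, hud⟩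
  obtain ⟨p, E, rfl⟩ := ActEnd.exists_eq_diag_const_of_rank_eq_one hre
  obtain ⟨q, Γ, rfl⟩ := ActEnd.exists_eq_diag_const_of_rank_eq_one hrg
  obtain ⟨F, rfl⟩ := ActEnd.exists_eq_diag_const_of_mem_lIdeal (hfg ▸ mem_lIdeal_self f)
  obtain ⟨H, rfl⟩ := ActEnd.exists_eq_diag_const_of_mem_lIdeal (hhe ▸ mem_lIdeal_self h)
  have hE := ActEnd.apply_eq_one_of_diag_const_mul_self he
  have hF := ActEnd.apply_eq_one_of_diag_const_mul_self hf
  have hΓ := ActEnd.apply_eq_one_of_diag_const_mul_self hg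
  have hH := ActEnd.apply_eq_one_of_diag_const_mul_self hh
  have hFE := ActEnd.apply_eq_mul_of_rIdeal_eq hE hef
  have hHΓ := ActEnd.apply_eq_mul_of_rIdeal_eq hΓ hgh
  have hFΓ : F p = Γ p := by
    rw [ActEnd.diag_const_mul_apply hek p, ActEnd.diag_const_mul_apply hhk p, hE, hH]
  have hEF : E q * F p = 1 := by rw [← hFE, hF]
  have hΓH : Γ p * H q = 1 := by rw [← hHΓ, hH]
  refine ActEnd.exists_upDown_of_apply_eq hE hF hΓ hH ?_ fun i => ?_
  · rw [eq_inv_of_mul_eq_one_left hEF, eq_inv_of_mul_eq_one_right hΓH, hFΓ]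
  · rw [hHΓ, hFΓ, mul_assoc, mul_eq_one_comm.mp hΓH, mul_one]

/-- A singular `E`-square `(e, f, g, h)` of rank-1 idempotents of `End F_n(G)`
(`n ≥ 3`) is in fact up-down singular: if some idempotent `k` witnesses an
up-down or a left-right singularisation, then some idempotent `k'` witnesses an
up-down one. -/
theorem stmt9 {G : Type*} [Group G] {n : ℕ} (hn : 3 ≤ n) (e f g h : ActEnd G n)
    (he : e * e = e) (hf : f * f = f) (hg : g * g = g) (hh : h * h = h)
    (hre : ActEnd.rank e = 1) (hrf : ActEnd.rank f = 1)
    (hrg : ActEnd.rank g = 1) (hrh : ActEnd.rank h = 1)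
    (hef : rIdeal e = rIdeal f) (hfg : lIdeal f = lIdeal g)
    (hgh : rIdeal g = rIdeal h) (hhe : lIdeal h = lIdeal e) :
    (∃ k : ActEnd G n, k * k = k ∧
        ((e * k = e ∧ f * k = f ∧ k * e = h ∧ k * f = g) ∨
         (k * e = e ∧ k * h = h ∧ e * k = f ∧ h * k = g))) →
      ∃ k' : ActEnd G n, k' * k' = k' ∧
        (e * k' = e ∧ f * k' = f ∧ k' * e = h ∧ k' * f = g) :=
  stmt9_general e f g h he hf hg hh hre hrg hef hfg hgh hhe
end

section
/- Let G be a group, n ≥ 3, E the set of idempotents of End F_n(G), and IG(E) the free idempotent generated monoid over E. If e, f, g ∈ End F_n(G) are idempotents of rank 1 with ef = g, then ē f̄ = ḡ in IG(E). -/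
/-- The defining relation of the free idempotent generated monoid `IG(E)`:
`ē f̄ = (e f)‾` whenever `{e, f} ∩ {e f, f e} ≠ ∅`. -/
def igRel (M : Type*) [Monoid M] :
    FreeMonoid {e : M // e * e = e} → FreeMonoid {e : M // e * e = e} → Prop :=
  fun x y => ∃ e f g : {e : M // e * e = e},
    (e.1 * f.1 = e.1 ∨ e.1 * f.1 = f.1 ∨ f.1 * e.1 = e.1 ∨ f.1 * e.1 = f.1) ∧
    e.1 * f.1 = g.1 ∧
    x = FreeMonoid.of e * FreeMonoid.of f ∧ y = FreeMonoid.of g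

/-- The free idempotent generated monoid over the biordered set of idempotents
of `M`: the presented monoid with generators `ē` for each idempotent `e` and
relations `ē f̄ = (e f)‾` whenever `{e, f} ∩ {e f, f e} ≠ ∅`. -/
abbrev IG (M : Type*) [Monoid M] : Type _ := (conGen (igRel M)).Quotient

/-- The generator `ē` of `IG(E)` corresponding to the idempotent `e`. -/
def ebar {M : Type*} [Monoid M] (e : {e : M // e * e = e}) : IG M :=
  (conGen (igRel M)).mk' (FreeMonoid.of e)

/-!
Let `J` be the set of indices `j` such that `G x_j` meets the image of `f`, and let `s` be the
idempotent that is the identity on the orbits `G x_j` with `j ∈ J` and agrees with `e` elsewhere.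
Then `e s = e` and `f s = f` are basic products, and `s f = g`: off `J` this is `e f = g`, while
on `J` both `f` and `g` are the identity, because an idempotent fixes every orbit meeting its
image and, `f` having rank 1, the images of `f` and `g = e f` lie in one orbit. Hence
`ē f̄ = ē s̄ f̄ = ē ḡ = (e g)‾ = ḡ`.
-/

section FreeIdempotentGenerated

variable {M : Type*} [Monoid M]

theorem ebar_mul_ebar_of_basic {e f g : {a : M // a * a = a}}
    (hbasic : e.1 * f.1 = e.1 ∨ e.1 * f.1 = f.1 ∨ f.1 * e.1 = e.1 ∨ f.1 * e.1 = f.1)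
    (hefg : e.1 * f.1 = g.1) : ebar e * ebar f = ebar g := by
  rw [ebar, ebar, ebar, ← map_mul]
  exact (Con.eq _).mpr (ConGen.Rel.of _ _ ⟨e, f, g, hbasic, hefg, rfl, rfl⟩)

theorem ebar_mul_ebar_of_common_right_identity {e f g s : M}
    (he : e * e = e) (hf : f * f = f) (hg : g * g = g) (hs : s * s = s)
    (hes : e * s = e) (hfs : f * s = f) (hsf : s * f = g) (hefg : e * f = g) :
    ebar ⟨e, he⟩ * ebar ⟨f, hf⟩ = ebar ⟨g, hg⟩ := by
  have heg : e * g = g := by rw [← hefg, ← mul_assoc, he]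
  calc ebar ⟨e, he⟩ * ebar ⟨f, hf⟩
      = ebar ⟨e, he⟩ * ebar ⟨s, hs⟩ * ebar ⟨f, hf⟩ := by
        rw [ebar_mul_ebar_of_basic (e := ⟨e, he⟩) (f := ⟨s, hs⟩) (g := ⟨e, he⟩)
          (Or.inl hes) hes]
    _ = ebar ⟨e, he⟩ * ebar ⟨g, hg⟩ := by
        rw [mul_assoc, ebar_mul_ebar_of_basic (e := ⟨s, hs⟩) (g := ⟨g, hg⟩)
          (Or.inr (Or.inr (Or.inr hfs))) hsf]
    _ = ebar ⟨g, hg⟩ := ebar_mul_ebar_of_basic (Or.inr (Or.inl heg)) heg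

end FreeIdempotentGenerated

namespace ActEnd

variable {G : Type*} [Group G] {n : ℕ}

theorem toFun_eq_self_of_mul_self {a : ActEnd G n} (ha : a * a = a) {x y : G × Fin n}
    (hy : (a.toFun y).2 = x.2) : a.toFun x = x := by
  obtain ⟨k, i⟩ := x
  set h := k * (a.toFun y).1⁻¹
  have hx : a.toFun (h * y.1, y.2) = (k, i) := by
    rw [a.equivariant, hy, inv_mul_cancel_right]
  rw [← hx, ← mul_toFun, ha]

theorem snd_toFun_eq_of_rank_eq_one {a : ActEnd G n} (ha : a.rank = 1) (x y : G × Fin n) :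
    (a.toFun x).2 = (a.toFun y).2 :=
  congrArg Subtype.val <|
    (Nat.card_eq_one_iff_unique.mp ha).1.elim ⟨_, x, rfl⟩ ⟨_, y, rfl⟩

open Classical in
noncomputable def patch (a : ActEnd G n) (J : Set (Fin n)) : ActEnd G n where
  toFun x := if x.2 ∈ J then x else a.toFun x
  equivariant h x := by
    by_cases hx : x.2 ∈ J <;> simp [hx, a.equivariant]

variable {a : ActEnd G n} {J : Set (Fin n)} {x : G × Fin n}

theorem patch_toFun_of_mem (hx : x.2 ∈ J) : (a.patch J).toFun x = x := if_pos hx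

theorem patch_toFun_of_notMem (hx : x.2 ∉ J) : (a.patch J).toFun x = a.toFun x := if_neg hx

theorem patch_toFun_toFun (ha : a * a = a) (x : G × Fin n) :
    (a.patch J).toFun (a.toFun x) = a.toFun x := by
  by_cases hx : (a.toFun x).2 ∈ J
  · exact patch_toFun_of_mem hx
  · rw [patch_toFun_of_notMem hx, ← mul_toFun, ha]

theorem patch_mul_self (ha : a * a = a) : a.patch J * a.patch J = a.patch J := by
  refine ext' (funext fun x => ?_)
  by_cases hx : x.2 ∈ J
  · simp only [mul_toFun, patch_toFun_of_mem hx]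
  · simp only [mul_toFun, patch_toFun_of_notMem hx, patch_toFun_toFun ha]

theorem mul_patch_of_mul_self (ha : a * a = a) : a * a.patch J = a :=
  ext' (funext fun x => patch_toFun_toFun ha x)

theorem mul_patch_of_forall_mem {b : ActEnd G n} (hb : ∀ x, (b.toFun x).2 ∈ J) :
    b * a.patch J = b :=
  ext' (funext fun x => patch_toFun_of_mem (hb x))

theorem patch_mul_of_forall_mem {b : ActEnd G n}
    (hb : ∀ x, x.2 ∈ J → b.toFun x = (a * b).toFun x) : a.patch J * b = a * b := by
  refine ext' (funext fun x => ?_)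
  by_cases hx : x.2 ∈ J
  · rw [mul_toFun, patch_toFun_of_mem hx, hb x hx]
  · rw [mul_toFun, patch_toFun_of_notMem hx, mul_toFun]

end ActEnd

theorem stmt10_general {G : Type*} [Group G] {n : ℕ}
    (e f g : ActEnd G n) (he : e * e = e) (hf : f * f = f) (hg : g * g = g)
    (hrf : ActEnd.rank f = 1)
    (hefg : e * f = g) :
    ebar ⟨e, he⟩ * ebar ⟨f, hf⟩ = ebar ⟨g, hg⟩ := by
  set J : Set (Fin n) := {j | ∃ y, (f.toFun y).2 = j}
  have hfg : ∀ x, x.2 ∈ J → f.toFun x = (e * f).toFun x := by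
    rintro x ⟨y, hy⟩
    have hfx : (f.toFun x).2 = x.2 := (ActEnd.snd_toFun_eq_of_rank_eq_one hrf x y).trans hy
    have hgx : (g.toFun x).2 = x.2 := by
      rw [← hefg, ActEnd.mul_toFun, ActEnd.snd_toFun_eq_of_rank_eq_one hrf _ x, hfx]
    rw [hefg, ActEnd.toFun_eq_self_of_mul_self hf hfx, ActEnd.toFun_eq_self_of_mul_self hg hgx]
  exact ebar_mul_ebar_of_common_right_identity he hf hg (ActEnd.patch_mul_self he)
    (ActEnd.mul_patch_of_mul_self he)
    (ActEnd.mul_patch_of_forall_mem (J := J) fun x => ⟨x, rfl⟩)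
    (hefg ▸ ActEnd.patch_mul_of_forall_mem hfg) hefg

/-- If `e, f, g` are rank-1 idempotents of `End F_n(G)` (`n ≥ 3`) with
`e f = g`, then `ē f̄ = ḡ` holds in `IG(E)`. -/
theorem stmt10 {G : Type*} [Group G] {n : ℕ} (hn : 3 ≤ n)
    (e f g : ActEnd G n) (he : e * e = e) (hf : f * f = f) (hg : g * g = g)
    (hre : ActEnd.rank e = 1) (hrf : ActEnd.rank f = 1) (hrg : ActEnd.rank g = 1)
    (hefg : e * f = g) :
    ebar ⟨e, he⟩ * ebar ⟨f, hf⟩ = ebar ⟨g, hg⟩ :=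
  stmt10_general e f g he hf hg hrf hefg
end

section
/- Let G be a group, n ≥ 3, E the set of idempotents of End F_n(G), and IG(E) the free idempotent generated monoid over E. For any a : {1,…,n} → G with a(1) = 1 and any j ∈ {1,…,n}, the following hold in IG(E): (ē_{11} ē_{a,j} ē_{11})(ē_{1j} ē_{a,1}) = ē_{11} and (ē_{1j} ē_{a,1})(ē_{11} ē_{a,j} ē_{11}) = ē_{11}; that is, ē_{1j} ē_{a,1} is the inverse of ē_{11} ē_{a,j} ē_{11} in the maximal subgroup of IG(E) at ē_{11}. -/
namespace ActEnd

variable {G : Type*} [Group G] {n : ℕ}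

/-- The rank-1 idempotent `e_{a,j}` given by `(g x_t) e_{a,j} = (g * a t * (a j)⁻¹) x_j`.
Taking `a` constantly `1` gives `e_{1j}`, and also `j = 0` gives `e_{11}`
(indices `1, …, n` are realised as `Fin n`, with `1 ↦ 0`). -/
def eaj (a : Fin n → G) (j : Fin n) : ActEnd G n :=
  ⟨fun x => (x.1 * a x.2 * (a j)⁻¹, j), by intro h x; simp [mul_assoc]⟩

theorem eaj_idem (a : Fin n → G) (j : Fin n) : eaj a j * eaj a j = eaj a j := by
  apply ext'
  funext x
  simp [eaj, mul_assoc]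

/-- The map `a_g : g' x_t ↦ (g' * g) x_1`. -/
def aMap (g : G) (h0 : 0 < n) : ActEnd G n :=
  ⟨fun x => (x.1 * g, ⟨0, h0⟩), by intro h x; simp [mul_assoc]⟩

end ActEnd

/-- `ē_{a,j}` as an element of `IG(E)` for `E` the idempotents of `End F_n(G)`. -/
def igE {G : Type*} [Group G] {n : ℕ} (a : Fin n → G) (j : Fin n) : IG (ActEnd G n) :=
  ebar ⟨ActEnd.eaj a j, ActEnd.eaj_idem a j⟩

/-- `ē_{11}` as an element of `IG(E)`. -/
def ig11 {G : Type*} [Group G] {n : ℕ} (h0 : 0 < n) : IG (ActEnd G n) :=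
  igE (fun _ => (1 : G)) ⟨0, h0⟩


/-! Both identities are consequences of two kinds of basic pairs among the idempotents involved:
`e_{a,j} e_{b,j} = e_{a,j}` (same index) and `e_{a,j} e_{a,k} = e_{a,k}` (same function). Using only
these relations in `IG(E)`, each of the two products collapses to `ē_{11}` in four steps. -/

namespace ActEnd

variable {G : Type*} [Group G] {n : ℕ}

theorem eaj_mul_eaj_same_index (a b : Fin n → G) (j : Fin n) : eaj a j * eaj b j = eaj a j := by
  apply ext'
  funext x
  simp [eaj, mul_assoc]

theorem eaj_mul_eaj_same_fun (a : Fin n → G) (j k : Fin n) : eaj a j * eaj a k = eaj a k := by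
  apply ext'
  funext x
  simp [eaj, mul_assoc]

end ActEnd

section FreeIdempotentGenerated

variable {M : Type*} [Monoid M]

theorem ebar_mul_ebar (e f g : {e : M // e * e = e})
    (hbasic : e.1 * f.1 = e.1 ∨ e.1 * f.1 = f.1 ∨ f.1 * e.1 = e.1 ∨ f.1 * e.1 = f.1)
    (hg : e.1 * f.1 = g.1) : ebar e * ebar f = ebar g := by
  rw [ebar, ebar, ← map_mul]
  exact (Con.eq _).2 (ConGen.Rel.of _ _ ⟨e, f, g, hbasic, hg, rfl, rfl⟩)

theorem ebar_mul_ebar_of_mul_eq_left {e f : {e : M // e * e = e}} (h : e.1 * f.1 = e.1) :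
    ebar e * ebar f = ebar e :=
  ebar_mul_ebar e f e (Or.inl h) h

theorem ebar_mul_ebar_of_mul_eq_right {e f : {e : M // e * e = e}} (h : e.1 * f.1 = f.1) :
    ebar e * ebar f = ebar f :=
  ebar_mul_ebar e f f (Or.inr (Or.inl h)) h

end FreeIdempotentGenerated

section IGEnd

variable {G : Type*} [Group G] {n : ℕ}

theorem igE_mul_igE_same_index (a b : Fin n → G) (j : Fin n) : igE a j * igE b j = igE a j :=
  ebar_mul_ebar_of_mul_eq_left (ActEnd.eaj_mul_eaj_same_index a b j)

theorem igE_mul_igE_same_fun (a : Fin n → G) (j k : Fin n) : igE a j * igE a k = igE a k :=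
  ebar_mul_ebar_of_mul_eq_right (ActEnd.eaj_mul_eaj_same_fun a j k)

end IGEnd

/-- In `IG(E)`, `ē_{1j} ē_{a,1}` is the (two-sided) inverse of
`ē_{11} ē_{a,j} ē_{11}` in the maximal subgroup at `ē_{11}`. -/
theorem stmt12 {G : Type*} [Group G] {n : ℕ} (hn : 3 ≤ n)
    (a : Fin n → G) (j : Fin n) :
    (ig11 (G := G) (n := n) (by omega) * igE a j * ig11 (G := G) (n := n) (by omega)) *
        (igE (fun _ => (1 : G)) j * igE a ⟨0, by omega⟩) = ig11 (G := G) (n := n) (by omega) ∧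
    (igE (fun _ => (1 : G)) j * igE a ⟨0, by omega⟩) *
        (ig11 (G := G) (n := n) (by omega) * igE a j * ig11 (G := G) (n := n) (by omega)) = ig11 (G := G) (n := n) (by omega) := by
  set one : Fin n → G := fun _ => 1
  set i₀ : Fin n := ⟨0, by omega⟩
  have he : ∀ h₀ : 0 < n, ig11 (G := G) h₀ = igE one i₀ := fun _ => rfl
  simp only [he]
  constructor
  · calc igE one i₀ * igE a j * igE one i₀ * (igE one j * igE a i₀)
        = igE one i₀ * igE a j * (igE one i₀ * igE one j) * igE a i₀ := by simp only [mul_assoc]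
      _ = igE one i₀ * (igE a j * igE one j) * igE a i₀ := by
          rw [igE_mul_igE_same_fun, mul_assoc (igE one i₀)]
      _ = igE one i₀ * (igE a j * igE a i₀) := by rw [igE_mul_igE_same_index, mul_assoc]
      _ = igE one i₀ := by rw [igE_mul_igE_same_fun, igE_mul_igE_same_index]
  · calc igE one j * igE a i₀ * (igE one i₀ * igE a j * igE one i₀)
        = igE one j * (igE a i₀ * igE one i₀) * igE a j * igE one i₀ := by simp only [mul_assoc]
      _ = igE one j * (igE a i₀ * igE a j) * igE one i₀ := by
          rw [igE_mul_igE_same_index, mul_assoc (igE one j)]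
      _ = igE one j * igE a j * igE one i₀ := by rw [igE_mul_igE_same_fun]
      _ = igE one i₀ := by rw [igE_mul_igE_same_index, igE_mul_igE_same_fun]
end
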